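/- Fix N ≥ 1, constants b > 0, c ≥ 0, and 0 < κ < 1 such that b ≥ (1 + c) / κ^{1/N}. Let λ denote Lebesgue measure on ℝ^N, let A ⊆ ∏_{k=1}^N [−(1+c), 1+c] and B ⊆ ℝ^N be measurable with 0 < λ(A) and 0 < λ(B) < ∞, let ρ be the uniform probability density on the cube [−b,b]^N (ρ(z) = (2b)^{−N} for z ∈ [−b,b]^N and 0 otherwise), and let F : A → ℝ^N be measurable satisfying the support condition: for every x ∈ A, ρ(y − F(x)) = 0 for almost every y ∉ B. Then the composition operator M : L²(B) → L²(A), (M v)(x) = ∫_B ρ(y − F(x)) v(y) dy, and the transfer operator N̂ : L²(A) → L²(B), (N̂ p)(y) = ∫_A ρ(y − F(x)) p(x) dx, both have squared operator norm at most ((1+c)/b)^N ≤ κ, independently of the neural network weights. Moreover, for the input layer, if λ(A) ≤ (2b)^N κ then the same operators have squared operator norm at most κ. -/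

import Mathlib

/-!
Both operators are integral operators with kernel `k x y = ρ (y - F x)` (for `T` transposed), so
by Cauchy–Schwarz their squared norms are bounded by the Hilbert–Schmidt integral
`∫_A ∫_B k²`. As `ρ²` equals `(2b)^{-2N}` on a cube of volume `(2b)^N`, every inner integral
is at most `(2b)^{-N}`, whence the bound `λ(A) (2b)^{-N} ≤ (2(1+c))^N / (2b)^N = ((1+c)/b)^N`;
the choice `b ≥ (1+c)/κ^{1/N}` makes this at most `κ`.
-/

open MeasureTheory

theorem ContinuousLinearMap.opNorm_sq_le_of_norm_sq_le {E F : Type*} [SeminormedAddCommGroup E]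
    [SeminormedAddCommGroup F] [NormedSpace ℝ E] [NormedSpace ℝ F] (f : E →L[ℝ] F) {S : ℝ}
    (hS : 0 ≤ S) (h : ∀ x, ‖f x‖ ^ 2 ≤ S * ‖x‖ ^ 2) : ‖f‖ ^ 2 ≤ S := by
  refine (Real.le_sqrt (norm_nonneg _) hS).1
    (f.opNorm_le_bound (Real.sqrt_nonneg S) fun x => ?_)
  rw [← Real.sqrt_sq (norm_nonneg x), ← Real.sqrt_mul hS]
  exact Real.le_sqrt_of_sq_le (h x)

namespace MeasureTheory

variable {α β : Type*} [MeasurableSpace α] [MeasurableSpace β]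
  {μ : Measure α} {ν : Measure β}

theorem L2.norm_sq_eq_integral_sq (u : Lp ℝ 2 μ) : ‖u‖ ^ 2 = ∫ a, u a ^ 2 ∂μ := by
  rw [← real_inner_self_eq_norm_sq, L2.inner_def]
  simp [sq]

theorem MemLp.integral_mul_eq_inner_toLp {f g : α → ℝ} (hf : MemLp f 2 μ)
    (hg : MemLp g 2 μ) :
    ∫ a, f a * g a ∂μ = inner ℝ (hf.toLp f) (hg.toLp g) := by
  rw [L2.inner_def]
  refine integral_congr_ae ?_
  filter_upwards [hf.coeFn_toLp, hg.coeFn_toLp] with a hfa hga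
  simp [hfa, hga, mul_comm]

theorem sq_integral_mul_le {f g : α → ℝ} (hf : MemLp f 2 μ) (hg : MemLp g 2 μ) :
    (∫ a, f a * g a ∂μ) ^ 2 ≤ (∫ a, f a ^ 2 ∂μ) * ∫ a, g a ^ 2 ∂μ := by
  simp only [sq, hf.integral_mul_eq_inner_toLp hg, hf.integral_mul_eq_inner_toLp hf,
    hg.integral_mul_eq_inner_toLp hg]
  exact real_inner_mul_inner_self_le _ _

theorem opNorm_sq_le_integral_kernel_sq [SFinite μ] [SFinite ν]
    (op : Lp ℝ 2 ν →L[ℝ] Lp ℝ 2 μ) {k : α → β → ℝ}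
    (hk_meas : AEStronglyMeasurable (fun p : α × β => k p.1 p.2) (μ.prod ν))
    (hk : Integrable (fun p : α × β => k p.1 p.2 ^ 2) (μ.prod ν))
    (hop : ∀ v, ∀ᵐ x ∂μ, op v x = ∫ y, k x y * v y ∂ν) :
    ‖op‖ ^ 2 ≤ ∫ p, k p.1 p.2 ^ 2 ∂(μ.prod ν) := by
  have hrow : ∀ᵐ x ∂μ, MemLp (k x) 2 ν := by
    filter_upwards [hk_meas.prodMk_left, hk.prod_right_ae] with x hmeas hint
    exact (memLp_two_iff_integrable_sq hmeas).2 hint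
  refine op.opNorm_sq_le_of_norm_sq_le (integral_nonneg fun _ => sq_nonneg _) fun v => ?_
  calc ‖op v‖ ^ 2 = ∫ x, op v x ^ 2 ∂μ := L2.norm_sq_eq_integral_sq _
    _ ≤ ∫ x, (∫ y, k x y ^ 2 ∂ν) * ‖v‖ ^ 2 ∂μ := by
      refine integral_mono_ae (Lp.memLp (op v)).integrable_sq
        (hk.integral_prod_left.mul_const _) ?_
      filter_upwards [hop v, hrow] with x hx hkx
      rw [hx, L2.norm_sq_eq_integral_sq v]
      exact sq_integral_mul_le hkx (Lp.memLp v)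
    _ = (∫ p, k p.1 p.2 ^ 2 ∂(μ.prod ν)) * ‖v‖ ^ 2 := by
      rw [integral_mul_const, integral_prod _ hk]

end MeasureTheory

theorem setOf_forall_abs_le_eq_closedBall {ι : Type*} [Fintype ι] {r : ℝ} (hr : 0 ≤ r) :
    {x : ι → ℝ | ∀ i, |x i| ≤ r} = Metric.closedBall 0 r := by
  ext x
  simp [pi_norm_le_iff_of_nonneg hr]

theorem div_pow_le_of_div_rpow_inv_le {a b κ : ℝ} {n : ℕ} (hn : n ≠ 0) (ha : 0 ≤ a)
    (hb : 0 < b) (hκ : 0 < κ) (h : a / κ ^ (n⁻¹ : ℝ) ≤ b) : (a / b) ^ n ≤ κ :=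
  calc (a / b) ^ n ≤ (κ ^ (n⁻¹ : ℝ)) ^ n :=
        pow_le_pow_left₀ (by positivity) ((div_le_comm₀ (by positivity) hb).1 h) n
    _ = κ := Real.rpow_inv_natCast_pow hκ.le hn

noncomputable def uniformCubeDensity (N : ℕ) (b : ℝ) : (Fin N → ℝ) → ℝ :=
  (Metric.closedBall 0 b).indicator fun _ => ((2 * b) ^ N)⁻¹

namespace uniformCubeDensity

variable {N : ℕ} {b : ℝ}

theorem measurable : Measurable (uniformCubeDensity N b) :=
  measurable_const.indicator Metric.isClosed_closedBall.measurableSet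

theorem sq_eq_indicator (z : Fin N → ℝ) :
    uniformCubeDensity N b z ^ 2
      = (Metric.closedBall 0 b).indicator (fun _ => ((2 * b) ^ N)⁻¹ ^ 2) z := by
  by_cases hz : z ∈ Metric.closedBall 0 b <;> simp [uniformCubeDensity, hz]

theorem integrable_sq_comp_sub (w : Fin N → ℝ) :
    Integrable (fun y => uniformCubeDensity N b (y - w) ^ 2) := by
  simp only [sq_eq_indicator]
  exact ((integrable_indicator_iff Metric.isClosed_closedBall.measurableSet).2
    (integrableOn_const measure_closedBall_lt_top.ne)).comp_sub_right w

theorem integral_sq_comp_sub (hb : 0 < b) (w : Fin N → ℝ) :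
    ∫ y, uniformCubeDensity N b (y - w) ^ 2 = ((2 * b) ^ N)⁻¹ := by
  rw [integral_sub_right_eq_self (fun y => uniformCubeDensity N b y ^ 2) w]
  simp only [sq_eq_indicator]
  rw [integral_indicator_const _ Metric.isClosed_closedBall.measurableSet, measureReal_def,
    Real.volume_pi_closedBall 0 hb.le, ENNReal.toReal_ofReal (by positivity), Fintype.card_fin,
    smul_eq_mul]
  have : (2 * b) ^ N ≠ 0 := by positivity
  field_simp

theorem setIntegral_sq_comp_sub_le (hb : 0 < b) (B : Set (Fin N → ℝ)) (w : Fin N → ℝ) :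
    ∫ y in B, uniformCubeDensity N b (y - w) ^ 2 ≤ ((2 * b) ^ N)⁻¹ :=
  (setIntegral_le_integral (integrable_sq_comp_sub w) (.of_forall fun _ => sq_nonneg _)).trans_eq
    (integral_sq_comp_sub hb w)

variable {F : (Fin N → ℝ) → Fin N → ℝ} {A B : Set (Fin N → ℝ)}

theorem integrable_kernel_sq (hb : 0 < b) (hF : Measurable F) (hA : volume A ≠ ⊤) :
    Integrable
      (fun p : (Fin N → ℝ) × (Fin N → ℝ) => uniformCubeDensity N b (p.2 - F p.1) ^ 2)
      ((volume.restrict A).prod (volume.restrict B)) := by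
  have : IsFiniteMeasure (volume.restrict A) := isFiniteMeasure_restrict.2 hA
  have hmeas : Measurable fun p : (Fin N → ℝ) × (Fin N → ℝ) =>
      uniformCubeDensity N b (p.2 - F p.1) ^ 2 :=
    (measurable.comp (measurable_snd.sub (hF.comp measurable_fst))).pow_const 2
  refine (integrable_prod_iff hmeas.aestronglyMeasurable).2
    ⟨.of_forall fun x => (integrable_sq_comp_sub (F x)).restrict, ?_⟩
  refine .of_bound (hmeas.norm.stronglyMeasurable.integral_prod_right').aestronglyMeasurable
    ((2 * b) ^ N)⁻¹ (.of_forall fun x => ?_)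
  rw [Real.norm_of_nonneg (integral_nonneg fun _ => norm_nonneg _)]
  simpa using setIntegral_sq_comp_sub_le hb B (F x)

theorem integral_kernel_sq_le (hb : 0 < b) (hF : Measurable F) (hA : volume A ≠ ⊤) :
    ∫ p, uniformCubeDensity N b (p.2 - F p.1) ^ 2
        ∂(volume.restrict A).prod (volume.restrict B) ≤ volume.real A * ((2 * b) ^ N)⁻¹ := by
  have : IsFiniteMeasure (volume.restrict A) := isFiniteMeasure_restrict.2 hA
  rw [integral_prod _ (integrable_kernel_sq hb hF hA), ← smul_eq_mul, ← setIntegral_const]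
  exact integral_mono (integrable_kernel_sq hb hF hA).integral_prod_left
    (integrable_const _) fun x => setIntegral_sq_comp_sub_le hb B (F x)

end uniformCubeDensity

theorem uniform_noise_contraction_general
    (N : ℕ) (hN : 1 ≤ N) (b c κ : ℝ)
    (hb : 0 < b) (hc : 0 ≤ c) (hκ0 : 0 < κ)
    (hbκ : (1 + c) / κ ^ ((N : ℝ)⁻¹) ≤ b)
    (A B : Set (Fin N → ℝ))
    (hAcube : A ⊆ {x : Fin N → ℝ | ∀ i, |x i| ≤ 1 + c})
    (ρ : (Fin N → ℝ) → ℝ)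
    (hρ : ρ = Set.indicator {z : Fin N → ℝ | ∀ i, |z i| ≤ b}
      (fun _ => ((2 * b) ^ N)⁻¹))
    (F : (Fin N → ℝ) → (Fin N → ℝ)) (hF : Measurable F)
    (M : Lp ℝ 2 (volume.restrict B) →L[ℝ] Lp ℝ 2 (volume.restrict A))
    (hM : ∀ v, ∀ᵐ x ∂volume.restrict A, M v x = ∫ y in B, ρ (y - F x) * v y)
    (T : Lp ℝ 2 (volume.restrict A) →L[ℝ] Lp ℝ 2 (volume.restrict B))
    (hT : ∀ p, ∀ᵐ y ∂volume.restrict B, T p y = ∫ x in A, ρ (y - F x) * p x) :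
    ‖M‖ ^ 2 ≤ ((1 + c) / b) ^ N ∧ ‖T‖ ^ 2 ≤ ((1 + c) / b) ^ N
      ∧ ((1 + c) / b) ^ N ≤ κ
      ∧ ((volume A).toReal ≤ (2 * b) ^ N * κ → ‖M‖ ^ 2 ≤ κ ∧ ‖T‖ ^ 2 ≤ κ) := by
  have hc1 : 0 ≤ 1 + c := by linarith
  rw [setOf_forall_abs_le_eq_closedBall hc1] at hAcube
  have hAvol : volume A ≤ ENNReal.ofReal ((2 * (1 + c)) ^ N) :=
    (measure_mono hAcube).trans_eq (by simp [Real.volume_pi_closedBall 0 hc1])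
  have hAfin : volume A ≠ ⊤ := ne_top_of_le_ne_top ENNReal.ofReal_ne_top hAvol
  obtain rfl : ρ = uniformCubeDensity N b := by
    rw [hρ, setOf_forall_abs_le_eq_closedBall hb.le]; rfl
  have hk := uniformCubeDensity.integrable_kernel_sq (B := B) hb hF hAfin
  have hk_meas : Measurable fun p : (Fin N → ℝ) × (Fin N → ℝ) =>
      uniformCubeDensity N b (p.2 - F p.1) :=
    uniformCubeDensity.measurable.comp (measurable_snd.sub (hF.comp measurable_fst))
  have hMS := opNorm_sq_le_integral_kernel_sq M hk_meas.aestronglyMeasurable hk hM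
  have hTS := (opNorm_sq_le_integral_kernel_sq T
    (k := fun y x => uniformCubeDensity N b (y - F x))
    (hk_meas.comp measurable_swap).aestronglyMeasurable hk.swap hT).trans_eq
    (integral_prod_swap fun p => uniformCubeDensity N b (p.2 - F p.1) ^ 2)
  have hS := uniformCubeDensity.integral_kernel_sq_le (B := B) hb hF hAfin
  have hSc : volume.real A * ((2 * b) ^ N)⁻¹ ≤ ((1 + c) / b) ^ N := by
    rw [← mul_div_mul_left (1 + c) b two_ne_zero, div_pow]
    exact mul_le_mul_of_nonneg_right (ENNReal.toReal_le_of_le_ofReal (by positivity) hAvol)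
      (by positivity)
  refine ⟨hMS.trans (hS.trans hSc), hTS.trans (hS.trans hSc),
    div_pow_le_of_div_rpow_inv_le (by omega) hc1 hb hκ0 hbκ, fun hAκ => ?_⟩
  have hSκ : volume.real A * ((2 * b) ^ N)⁻¹ ≤ κ := by
    rw [mul_inv_le_iff₀ (by positivity), mul_comm]
    exact hAκ
  exact ⟨hMS.trans (hS.trans hSκ), hTS.trans (hS.trans hSκ)⟩

/-- **Uniform noise makes the one-layer operators contractions.** The layer noise has
i.i.d. components uniform on `[-b, b]` (density `ρ`), `c` is the previous layer's noise
amplitude so the range `A` of the layer input is contained in the cube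
`[-(1+c), 1+c]^N`, and `b ≥ (1+c)/κ^{1/N}` with `0 < κ < 1`. Then the composition
operator `M : L²(B) → L²(A)` and the transfer operator `N̂ : L²(A) → L²(B)` both have
squared operator norm at most `((1+c)/b)^N ≤ κ`, independently of the neural network
weights. Moreover, for the input layer, if `λ(A) ≤ (2b)^N κ` then the same operators
have squared operator norm at most `κ`. -/
theorem uniform_noise_contraction
    (N : ℕ) (hN : 1 ≤ N) (b c κ : ℝ)
    (hb : 0 < b) (hc : 0 ≤ c) (hκ0 : 0 < κ) (hκ1 : κ < 1)
    (hbκ : (1 + c) / κ ^ ((N : ℝ)⁻¹) ≤ b)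
    (A B : Set (Fin N → ℝ)) (hAmeas : MeasurableSet A) (hBmeas : MeasurableSet B)
    (hAcube : A ⊆ {x : Fin N → ℝ | ∀ i, |x i| ≤ 1 + c})
    (hA0 : 0 < volume A) (hB0 : 0 < volume B) (hBfin : volume B < ⊤)
    (ρ : (Fin N → ℝ) → ℝ)
    (hρ : ρ = Set.indicator {z : Fin N → ℝ | ∀ i, |z i| ≤ b}
      (fun _ => ((2 * b) ^ N)⁻¹))
    (F : (Fin N → ℝ) → (Fin N → ℝ)) (hF : Measurable F)
    (hsupp : ∀ x ∈ A, ∀ᵐ y ∂volume, y ∉ B → ρ (y - F x) = 0)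
    (M : Lp ℝ 2 (volume.restrict B) →L[ℝ] Lp ℝ 2 (volume.restrict A))
    (hM : ∀ v, ∀ᵐ x ∂volume.restrict A, M v x = ∫ y in B, ρ (y - F x) * v y)
    (T : Lp ℝ 2 (volume.restrict A) →L[ℝ] Lp ℝ 2 (volume.restrict B))
    (hT : ∀ p, ∀ᵐ y ∂volume.restrict B, T p y = ∫ x in A, ρ (y - F x) * p x) :
    ‖M‖ ^ 2 ≤ ((1 + c) / b) ^ N ∧ ‖T‖ ^ 2 ≤ ((1 + c) / b) ^ N
      ∧ ((1 + c) / b) ^ N ≤ κ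
      ∧ ((volume A).toReal ≤ (2 * b) ^ N * κ → ‖M‖ ^ 2 ≤ κ ∧ ‖T‖ ^ 2 ≤ κ) :=
  uniform_noise_contraction_general N hN b c κ hb hc hκ0 hbκ A B hAcube ρ hρ F hF M hM T hT
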